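/- If s₁, s₂, s₃, u₁, u₂ ∈ (−1/6, 1/6), then in SL(2,ℝ) one has the decomposition B_{s₁} C_{u₁} B_{s₂} C_{u₂} B_{s₃} = C_u B_s A_τ, where ρ = u₂(s₁ + s₂) + u₁ s₁ (1 + u₂ s₂) satisfies 1 + ρ > 0, and u = u₁ + u₂ + (u₁ u₂ s₂ − (u₁ + u₂) ρ)/(1 + ρ), s = s₁ + s₂ + s₃ + ρ((2 + ρ) s₃ + s₁ + s₂) + u₁ s₁ s₂ (1 + ρ), τ = 2 ln(1 + ρ). -/

import Mathlib

noncomputable section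

open Real

abbrev SL2 : Type := Matrix.SpecialLinearGroup (Fin 2) ℝ

def Amat (t : ℝ) : SL2 :=
  ⟨!![Real.exp (t / 2), 0; 0, Real.exp (-(t / 2))], by
    simp [Matrix.det_fin_two_of, ← Real.exp_add]⟩

def Bmat (t : ℝ) : SL2 :=
  ⟨!![1, t; 0, 1], by simp [Matrix.det_fin_two_of]⟩

def Cmat (t : ℝ) : SL2 :=
  ⟨!![1, 0; t, 1], by simp [Matrix.det_fin_two_of]⟩

/-! Every `M ∈ SL(2,ℝ)` with `M 0 0 > 0` factors as `C_{c/a} B_{ab} A_{2 log a}` (with `a = M 0 0`,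
`b = M 0 1`, `c = M 1 0`); the remaining entry is forced by `det M = 1`. So it suffices to multiply
out `B_{s₁} C_{u₁} B_{s₂} C_{u₂} B_{s₃}`, whose top-left entry is
`1 + ρ = (1 + u₁ s₁)(1 + u₂ s₂) + u₂ s₁`; this is positive as soon as all the parameters have
absolute value at most `1/2`, since each product of two of them is then at least `-1/4`. -/

lemma coe_Amat (t : ℝ) :
    (Amat t : Matrix (Fin 2) (Fin 2) ℝ) = !![exp (t / 2), 0; 0, exp (-(t / 2))] := rfl

lemma coe_Bmat (t : ℝ) : (Bmat t : Matrix (Fin 2) (Fin 2) ℝ) = !![1, t; 0, 1] := rfl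

lemma coe_Cmat (t : ℝ) : (Cmat t : Matrix (Fin 2) (Fin 2) ℝ) = !![1, 0; t, 1] := rfl

theorem eq_Cmat_mul_Bmat_mul_Amat (M : SL2) (h : 0 < M 0 0) :
    M = Cmat (M 1 0 / M 0 0) * Bmat (M 0 1 * M 0 0) * Amat (2 * log (M 0 0)) := by
  have hdet : M 0 0 * M 1 1 - M 0 1 * M 1 0 = 1 := by
    rw [← Matrix.det_fin_two]; exact M.det_coe
  have hexp : exp (2 * log (M 0 0) / 2) = M 0 0 := by
    rw [mul_div_cancel_left₀ _ two_ne_zero, exp_log h]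
  refine Subtype.ext ?_
  conv_lhs => rw [Matrix.eta_fin_two (M : Matrix (Fin 2) (Fin 2) ℝ)]
  simp only [Matrix.SpecialLinearGroup.coe_mul, coe_Cmat, coe_Bmat, coe_Amat, Matrix.mul_fin_two,
    exp_neg, hexp, mul_one, one_mul, mul_zero, add_zero, zero_add]
  congr 1
  refine Matrix.vec2_eq (Matrix.vec2_eq ?_ ?_) (Matrix.vec2_eq ?_ ?_) <;> field_simp
  linear_combination hdet

lemma coe_Bmat_mul_Cmat_mul_Bmat_mul_Cmat_mul_Bmat (s₁ u₁ s₂ u₂ s₃ : ℝ) :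
    ((Bmat s₁ * Cmat u₁ * Bmat s₂ * Cmat u₂ * Bmat s₃ : SL2) : Matrix (Fin 2) (Fin 2) ℝ) =
      let a := (1 + u₁ * s₁) * (1 + u₂ * s₂) + u₂ * s₁
      let c := u₁ + u₂ + u₁ * u₂ * s₂
      !![a, a * s₃ + (1 + u₁ * s₁) * s₂ + s₁; c, c * s₃ + 1 + u₁ * s₂] := by
  simp only [Matrix.SpecialLinearGroup.coe_mul, coe_Bmat, coe_Cmat, Matrix.mul_fin_two]
  ring_nf

lemma neg_quarter_le_mul {x y : ℝ} (hx : |x| ≤ 1 / 2) (hy : |y| ≤ 1 / 2) : -(1 / 4) ≤ x * y := by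
  have : |x * y| ≤ 1 / 2 * (1 / 2) := abs_mul x y ▸ mul_le_mul hx hy (abs_nonneg y) (by norm_num)
  linarith [neg_abs_le (x * y)]

theorem one_add_mul_mul_one_add_mul_add_mul_pos {s₁ s₂ u₁ u₂ : ℝ} (hs₁ : |s₁| ≤ 1 / 2) (hs₂ : |s₂| ≤ 1 / 2)
    (hu₁ : |u₁| ≤ 1 / 2) (hu₂ : |u₂| ≤ 1 / 2) :
    0 < (1 + u₁ * s₁) * (1 + u₂ * s₂) + u₂ * s₁ := by
  have h₁ : 3 / 4 ≤ 1 + u₁ * s₁ := by linarith [neg_quarter_le_mul hu₁ hs₁]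
  have h₂ : 3 / 4 ≤ 1 + u₂ * s₂ := by linarith [neg_quarter_le_mul hu₂ hs₂]
  linarith [neg_quarter_le_mul hu₂ hs₁, mul_le_mul h₁ h₂ (by norm_num) (by linarith)]

theorem stmt_8_general (s₁ s₂ s₃ u₁ u₂ ρ : ℝ)
    (hs₁ : s₁ ∈ Set.Ioo (-(1/6) : ℝ) (1/6)) (hs₂ : s₂ ∈ Set.Ioo (-(1/6) : ℝ) (1/6))
    (hu₁ : u₁ ∈ Set.Ioo (-(1/6) : ℝ) (1/6))
    (hu₂ : u₂ ∈ Set.Ioo (-(1/6) : ℝ) (1/6))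
    (hρ : ρ = u₂ * (s₁ + s₂) + u₁ * s₁ * (1 + u₂ * s₂)) :
    0 < 1 + ρ ∧
    Bmat s₁ * Cmat u₁ * Bmat s₂ * Cmat u₂ * Bmat s₃ =
      Cmat (u₁ + u₂ + (u₁ * u₂ * s₂ - (u₁ + u₂) * ρ) / (1 + ρ)) *
        Bmat (s₁ + s₂ + s₃ + ρ * ((2 + ρ) * s₃ + s₁ + s₂) + u₁ * s₁ * s₂ * (1 + ρ)) *
        Amat (2 * Real.log (1 + ρ)) := by
  have abs_le_half : ∀ {x : ℝ}, x ∈ Set.Ioo (-(1/6) : ℝ) (1/6) → |x| ≤ 1 / 2 := fun hx =>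
    abs_le.2 ⟨by linarith [hx.1], by linarith [hx.2]⟩
  have h00 : (1 + u₁ * s₁) * (1 + u₂ * s₂) + u₂ * s₁ = 1 + ρ := by rw [hρ]; ring
  have hpos : 0 < 1 + ρ := h00 ▸ one_add_mul_mul_one_add_mul_add_mul_pos
    (abs_le_half hs₁) (abs_le_half hs₂) (abs_le_half hu₁) (abs_le_half hu₂)
  refine ⟨hpos, ?_⟩
  have hPmat := coe_Bmat_mul_Cmat_mul_Bmat_mul_Cmat_mul_Bmat s₁ u₁ s₂ u₂ s₃
  rw [h00] at hPmat
  set P := Bmat s₁ * Cmat u₁ * Bmat s₂ * Cmat u₂ * Bmat s₃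
  rw [eq_Cmat_mul_Bmat_mul_Amat P (by simpa [hPmat] using hpos)]
  simp only [hPmat, Matrix.of_apply, Matrix.cons_val', Matrix.cons_val_zero, Matrix.cons_val_one,
    Matrix.empty_val', Matrix.cons_val_fin_one]
  congr 3
  · field_simp
    ring
  · ring

theorem stmt_8 (s₁ s₂ s₃ u₁ u₂ ρ : ℝ)
    (hs₁ : s₁ ∈ Set.Ioo (-(1/6) : ℝ) (1/6)) (hs₂ : s₂ ∈ Set.Ioo (-(1/6) : ℝ) (1/6))
    (hs₃ : s₃ ∈ Set.Ioo (-(1/6) : ℝ) (1/6)) (hu₁ : u₁ ∈ Set.Ioo (-(1/6) : ℝ) (1/6))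
    (hu₂ : u₂ ∈ Set.Ioo (-(1/6) : ℝ) (1/6))
    (hρ : ρ = u₂ * (s₁ + s₂) + u₁ * s₁ * (1 + u₂ * s₂)) :
    0 < 1 + ρ ∧
    Bmat s₁ * Cmat u₁ * Bmat s₂ * Cmat u₂ * Bmat s₃ =
      Cmat (u₁ + u₂ + (u₁ * u₂ * s₂ - (u₁ + u₂) * ρ) / (1 + ρ)) *
        Bmat (s₁ + s₂ + s₃ + ρ * ((2 + ρ) * s₃ + s₁ + s₂) + u₁ * s₁ * s₂ * (1 + ρ)) *
        Amat (2 * Real.log (1 + ρ)) :=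
  stmt_8_general s₁ s₂ s₃ u₁ u₂ ρ hs₁ hs₂ hu₁ hu₂ hρ
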